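/- arXiv:2004.03105 — 5 statements merged into one kernel-verified Lean document; each statement's English description precedes it below -/
import Mathlib

section
/- If Y is a complex symmetric matrix and Y = U Y₀ Uᵀ is an Autonne–Takagi decomposition with U unitary and Y₀ real non-negative diagonal, and V is another unitary with Y = V Y₀ Vᵀ, then V = U Q where Q is block diagonal: Q = Q₁ ⊕ … ⊕ Q_d ⊕ W, each Q_j a real orthogonal n_j×n_j matrix (n_j the multiplicity of the j-th distinct positive singular value) and W an (n−r)×(n−r) unitary matrix, r = rank Y. -/
/-!
Put `Q = Uᴴ V`, a unitary matrix with `V = U Q`. The two decompositions give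
`Q D Qᵀ = D` for `D = diagonal σ`, and since `Qᵀ⁻¹ = Q̄` this is `Q D = D Q̄`, i.e.
`Q j k * σ k = σ j * conj (Q j k)` for all `j, k`. Comparing absolute values gives
`σ j = σ k` whenever `Q j k ≠ 0`; and when `σ j = σ k ≠ 0` the identity says
`Q j k = conj (Q j k)`.
-/

open Matrix ComplexConjugate

namespace Matrix

variable {m α : Type*} [Fintype m] [DecidableEq m] [CommRing α] [StarRing α]

theorem star_mul_mul_transpose_eq_of_mul_mul_transpose_eq {U V A B : Matrix m m α}
    (hU : U ∈ unitaryGroup m α) (h : U * A * Uᵀ = V * B * Vᵀ) :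
    (star U * V) * B * (star U * V)ᵀ = A := by
  have hUU : star U * U = 1 := mem_unitaryGroup_iff'.mp hU
  calc (star U * V) * B * (star U * V)ᵀ = star U * (V * B * Vᵀ) * (star U)ᵀ := by
        simp only [transpose_mul, mul_assoc]
    _ = (star U * U) * A * (star U * U)ᵀ := by
        rw [← h, transpose_mul]; simp only [mul_assoc]
    _ = A := by rw [hUU, transpose_one, one_mul, mul_one]

theorem mul_eq_mul_conjTranspose_transpose_of_mul_mul_transpose_eq {Q A : Matrix m m α}
    (hQ : Q ∈ unitaryGroup m α) (h : Q * A * Qᵀ = A) : Q * A = A * Qᴴᵀ := by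
  have hQQ : Qᵀ * Qᴴᵀ = 1 := by
    rw [← transpose_mul, ← star_eq_conjTranspose, mem_unitaryGroup_iff'.mp hQ, transpose_one]
  calc Q * A = Q * A * (Qᵀ * Qᴴᵀ) := by rw [hQQ, mul_one]
    _ = A * Qᴴᵀ := by rw [← mul_assoc, h]

theorem apply_mul_eq_mul_star_apply_of_mul_diagonal_eq {Q : Matrix m m α} {d : m → α}
    (h : Q * diagonal d = diagonal d * Qᴴᵀ) (j k : m) :
    Q j k * d k = d j * star (Q j k) := by
  simpa only [mul_diagonal, diagonal_mul, transpose_apply, conjTranspose_apply] using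
    congrFun (congrFun h j) k

end Matrix

namespace Complex

theorem eq_of_mul_ofReal_eq_ofReal_mul_conj {z : ℂ} {a b : ℝ} (ha : 0 ≤ a) (hb : 0 ≤ b)
    (hz : z ≠ 0) (h : z * b = a * conj z) : a = b := by
  have hnorm : ‖z‖ * b = a * ‖z‖ := by
    simpa [norm_real, abs_of_nonneg ha, abs_of_nonneg hb] using congrArg (‖·‖) h
  exact mul_left_cancel₀ (norm_ne_zero_iff.mpr hz) (by linarith)

theorem im_eq_zero_of_mul_ofReal_eq_ofReal_mul_conj {z : ℂ} {a : ℝ} (ha : a ≠ 0)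
    (h : z * a = a * conj z) : z.im = 0 := by
  have hconj : a * z = a * conj z := by rw [← h, mul_comm]
  exact conj_eq_iff_im.mp (mul_left_cancel₀ (ofReal_ne_zero.mpr ha) hconj).symm

end Complex

open Matrix in
theorem autonne_takagi_uniqueness_blocks_general {n : ℕ}
    (Y U V : Matrix (Fin n) (Fin n) ℂ) (σ : Fin n → ℝ)
    (hσ : ∀ j, 0 ≤ σ j)
    (hU : U ∈ Matrix.unitaryGroup (Fin n) ℂ)
    (hV : V ∈ Matrix.unitaryGroup (Fin n) ℂ)
    (hYU : Y = U * Matrix.diagonal (fun j => (σ j : ℂ)) * Uᵀ)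
    (hYV : Y = V * Matrix.diagonal (fun j => (σ j : ℂ)) * Vᵀ) :
    ∃ Q : Matrix (Fin n) (Fin n) ℂ,
      Q ∈ Matrix.unitaryGroup (Fin n) ℂ ∧
      (∀ j k, σ j ≠ σ k → Q j k = 0) ∧
      (∀ j k, σ j = σ k → σ j ≠ 0 → (Q j k).im = 0) ∧
      V = U * Q := by
  have hQ : star U * V ∈ unitaryGroup (Fin n) ℂ := mul_mem (Unitary.star_mem hU) hV
  have hentry := apply_mul_eq_mul_star_apply_of_mul_diagonal_eq
    (mul_eq_mul_conjTranspose_transpose_of_mul_mul_transpose_eq hQ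
      (star_mul_mul_transpose_eq_of_mul_mul_transpose_eq hU (hYU.symm.trans hYV)))
  refine ⟨star U * V, hQ, fun j k hjk => ?_, fun j k hjk hj => ?_, ?_⟩
  · by_contra hz
    exact hjk (Complex.eq_of_mul_ofReal_eq_ofReal_mul_conj (hσ j) (hσ k) hz (hentry j k))
  · have h := hentry j k
    rw [← hjk] at h
    exact Complex.im_eq_zero_of_mul_ofReal_eq_ofReal_mul_conj hj h
  · rw [← mul_assoc, mem_unitaryGroup_iff.mp hU, one_mul]

open Matrix in
/-- Uniqueness of the Autonne–Takagi decomposition (block form).  If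
`Y = U Y₀ Uᵀ = V Y₀ Vᵀ` with `U, V` unitary and `Y₀ = diagonal σ` real
non-negative diagonal, then `V = U * Q` where `Q` is unitary, block diagonal
with respect to the blocks of equal singular values (`Q j k = 0` whenever
`σ j ≠ σ k`), the blocks corresponding to the distinct positive singular
values are real (hence real orthogonal), and the block corresponding to the
zero singular values is an arbitrary unitary. -/
theorem autonne_takagi_uniqueness_blocks {n : ℕ}
    (Y U V : Matrix (Fin n) (Fin n) ℂ) (σ : Fin n → ℝ)
    (hYsymm : Yᵀ = Y)
    (hσ : ∀ j, 0 ≤ σ j)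
    (hU : U ∈ Matrix.unitaryGroup (Fin n) ℂ)
    (hV : V ∈ Matrix.unitaryGroup (Fin n) ℂ)
    (hYU : Y = U * Matrix.diagonal (fun j => (σ j : ℂ)) * Uᵀ)
    (hYV : Y = V * Matrix.diagonal (fun j => (σ j : ℂ)) * Vᵀ) :
    ∃ Q : Matrix (Fin n) (Fin n) ℂ,
      Q ∈ Matrix.unitaryGroup (Fin n) ℂ ∧
      (∀ j k, σ j ≠ σ k → Q j k = 0) ∧
      (∀ j k, σ j = σ k → σ j ≠ 0 → (Q j k).im = 0) ∧
      V = U * Q :=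
  autonne_takagi_uniqueness_blocks_general Y U V σ hσ hU hV hYU hYV
end

section
/- If Y is a complex symmetric n×n matrix with distinct singular values, and U, V are unitaries giving Autonne–Takagi decompositions Y = U Y₀ Uᵀ = V Y₀ Vᵀ with Y₀ the diagonal matrix of singular values, then V = U D where D is diagonal with entries ±1, except that when Y is singular the last diagonal entry (corresponding to the zero singular value) may be an arbitrary unit complex number e^{iθ}. -/
/-!
Put `W = U⁻¹ V`, a unitary matrix with `W Y₀ Wᵀ = Y₀`. Multiplying this identity by its
conjugate transpose gives `W Y₀² W⁻¹ = Y₀²`, so `W` commutes with the diagonal matrix `Y₀²`,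
whose entries are distinct because the singular values are distinct and non-negative. Hence
`W = diagonal d` with `|d j| = 1`, and reading `W Y₀ Wᵀ = Y₀` on the diagonal gives
`d j ^ 2 σ j = σ j`, i.e. `d j = ±1` whenever `σ j ≠ 0`.
-/

namespace Matrix

variable {n R : Type*} [Fintype n] [DecidableEq n]

section StarRing

variable [CommRing R] [StarRing R]

theorem mul_mul_transpose_left_cancel {U A B : Matrix n n R} (hU : U ∈ unitaryGroup n R)
    (h : U * A * Uᵀ = U * B * Uᵀ) : A = B := by
  have hUT : Uᵀ * (star U)ᵀ = 1 := by
    rw [← transpose_mul, mem_unitaryGroup_iff'.mp hU, transpose_one]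
  have hcancel (C : Matrix n n R) : star U * (U * C * Uᵀ) * (star U)ᵀ = C := by
    calc star U * (U * C * Uᵀ) * (star U)ᵀ = (star U * U) * C * (Uᵀ * (star U)ᵀ) := by
          noncomm_ring
      _ = C := by rw [mem_unitaryGroup_iff'.mp hU, hUT, one_mul, mul_one]
  rw [← hcancel A, h, hcancel]

theorem commute_mul_conjTranspose_of_mul_mul_transpose_eq {W A : Matrix n n R}
    (hW : W ∈ unitaryGroup n R) (h : W * A * Wᵀ = A) : Commute W (A * Aᴴ) := by
  have hWT : Wᵀ * Wᵀᴴ = 1 := by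
    rw [← star_eq_conjTranspose]
    exact mem_unitaryGroup_iff.mp (transpose_mem_unitaryGroup_iff.mpr hW)
  have hconj : W * (A * Aᴴ) * star W = A * Aᴴ := by
    calc W * (A * Aᴴ) * star W = W * A * (Wᵀ * Wᵀᴴ) * (Aᴴ * star W) := by
          rw [hWT]; noncomm_ring
      _ = (W * A * Wᵀ) * (W * A * Wᵀ)ᴴ := by
          simp only [conjTranspose_mul, star_eq_conjTranspose]; noncomm_ring
      _ = A * Aᴴ := by rw [h]
  calc W * (A * Aᴴ) = W * (A * Aᴴ) * star W * W := by
        rw [mul_assoc _ (star W), mem_unitaryGroup_iff'.mp hW, mul_one]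
    _ = A * Aᴴ * W := by rw [hconj]

theorem diagonal_mem_unitaryGroup_iff {d : n → R} :
    diagonal d ∈ unitaryGroup n R ↔ ∀ i, star (d i) * d i = 1 := by
  rw [mem_unitaryGroup_iff', star_eq_conjTranspose, diagonal_conjTranspose,
    diagonal_mul_diagonal, ← diagonal_one, diagonal_eq_diagonal_iff]
  rfl

end StarRing

section Domain

variable [CommRing R] [NoZeroDivisors R]

theorem eq_diagonal_of_commute_diagonal {W : Matrix n n R} {e : n → R}
    (he : Function.Injective e) (h : Commute W (diagonal e)) :
    W = diagonal fun i => W i i := by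
  ext i j
  rcases eq_or_ne i j with rfl | hij
  · simp
  · have hij' : (e j - e i) * W i j = 0 := by
      have := congrFun (congrFun h.eq i) j
      simp only [mul_diagonal, diagonal_mul] at this
      linear_combination this
    rw [diagonal_apply_ne _ hij]
    exact (mul_eq_zero.mp hij').resolve_left (sub_ne_zero.mpr (he.ne hij.symm))

theorem eq_one_or_eq_neg_one_of_diagonal_mul_mul_transpose_eq {d s : n → R}
    (h : diagonal d * diagonal s * (diagonal d)ᵀ = diagonal s) {j : n} (hj : s j ≠ 0) :
    d j = 1 ∨ d j = -1 := by
  have hjj := congrFun (congrFun h j) j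
  simp only [diagonal_transpose, diagonal_mul_diagonal, diagonal_apply_eq] at hjj
  refine mul_self_eq_one_iff.mp (mul_right_cancel₀ hj ?_)
  linear_combination hjj

end Domain

end Matrix

open Matrix in
theorem autonne_takagi_uniqueness_distinct_general {n : ℕ}
    (Y U V : Matrix (Fin n) (Fin n) ℂ) (σ : Fin n → ℝ)
    (hσ : ∀ j, 0 ≤ σ j)
    (hdistinct : Function.Injective σ)
    (hU : U ∈ Matrix.unitaryGroup (Fin n) ℂ)
    (hV : V ∈ Matrix.unitaryGroup (Fin n) ℂ)
    (hYU : Y = U * Matrix.diagonal (fun j => (σ j : ℂ)) * Uᵀ)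
    (hYV : Y = V * Matrix.diagonal (fun j => (σ j : ℂ)) * Vᵀ) :
    ∃ d : Fin n → ℂ,
      (∀ j, σ j ≠ 0 → d j = 1 ∨ d j = -1) ∧
      (∀ j, ‖d j‖ = 1) ∧
      V = U * Matrix.diagonal d := by
  obtain ⟨W, hW, rfl⟩ : ∃ W ∈ unitaryGroup (Fin n) ℂ, V = U * W :=
    ⟨star U * V, mul_mem (Unitary.star_mem hU) hV,
      by rw [← mul_assoc, mem_unitaryGroup_iff.mp hU, one_mul]⟩
  have hWσ : W * diagonal (fun j => (σ j : ℂ)) * Wᵀ = diagonal fun j => (σ j : ℂ) := by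
    refine (mul_mul_transpose_left_cancel hU ?_).symm
    rw [← hYU, hYV, transpose_mul]
    noncomm_ring
  have hσσ : diagonal (fun j => (σ j : ℂ)) * (diagonal fun j => (σ j : ℂ))ᴴ =
      diagonal fun j => ((σ j ^ 2 : ℝ) : ℂ) := by
    simp [diagonal_conjTranspose, diagonal_mul_diagonal, sq]
  have hsq_inj : Function.Injective fun j => ((σ j ^ 2 : ℝ) : ℂ) := fun i j hij =>
    hdistinct ((sq_eq_sq₀ (hσ i) (hσ j)).mp (Complex.ofReal_injective hij))
  obtain ⟨d, rfl⟩ : ∃ d, W = diagonal d := ⟨_, eq_diagonal_of_commute_diagonal hsq_inj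
    (hσσ ▸ commute_mul_conjTranspose_of_mul_mul_transpose_eq hW hWσ)⟩
  refine ⟨d, fun j hj => ?_, fun j => ?_, rfl⟩
  · exact eq_one_or_eq_neg_one_of_diagonal_mul_mul_transpose_eq hWσ
      (Complex.ofReal_ne_zero.mpr hj)
  · have := diagonal_mem_unitaryGroup_iff.mp hW j
    rwa [Complex.star_def, Complex.conj_mul', ← Complex.ofReal_pow, Complex.ofReal_eq_one,
      pow_eq_one_iff_of_nonneg (norm_nonneg _) two_ne_zero] at this

open Matrix in
/-- Uniqueness of the Autonne–Takagi decomposition for distinct singular values: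
if `Y = U Y₀ Uᵀ = V Y₀ Vᵀ` with `Y₀ = diagonal σ`, the `σ j` non-negative and
pairwise distinct, then `V = U * D` with `D` diagonal, `D j j = ±1` at every
index with `σ j ≠ 0`, and `|D j j| = 1` (an arbitrary phase `e^{iθ}`) at an
index with `σ j = 0`. -/
theorem autonne_takagi_uniqueness_distinct {n : ℕ}
    (Y U V : Matrix (Fin n) (Fin n) ℂ) (σ : Fin n → ℝ)
    (hYsymm : Yᵀ = Y)
    (hσ : ∀ j, 0 ≤ σ j)
    (hdistinct : Function.Injective σ)
    (hU : U ∈ Matrix.unitaryGroup (Fin n) ℂ)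
    (hV : V ∈ Matrix.unitaryGroup (Fin n) ℂ)
    (hYU : Y = U * Matrix.diagonal (fun j => (σ j : ℂ)) * Uᵀ)
    (hYV : Y = V * Matrix.diagonal (fun j => (σ j : ℂ)) * Vᵀ) :
    ∃ d : Fin n → ℂ,
      (∀ j, σ j ≠ 0 → d j = 1 ∨ d j = -1) ∧
      (∀ j, ‖d j‖ = 1) ∧
      V = U * Matrix.diagonal d :=
  autonne_takagi_uniqueness_distinct_general Y U V σ hσ hdistinct hU hV hYU hYV
end

section
/- (Forward direction of decoupling theorem) Let X be Hermitian and Y complex symmetric, the blocks of the complex covariance matrix of an n-mode Gaussian state. Suppose there exists a unitary Q such that both Q X Q† and Q Y Qᵀ are real matrices. Then there exist a unitary Z realizing an Autonne–Takagi factorization Y = Z† Y₀ Z* (Y₀ real non-negative diagonal) and a diagonal matrix R with diagonal entries in {1, i} such that R† Z X Z† R is real. -/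
/-!
`Q Y Qᵀ` is real and symmetric, so a real orthogonal `O` diagonalises it by congruence,
`O (Q Y Qᵀ) Oᵀ = diag d`. The diagonal phase `S` with `S j j = i` where `d j < 0` and `1` elsewhere
flips the signs, `S (diag d) S = diag |d|`, so `Z = S O Q` is an Autonne–Takagi unitary for `Y`.
With `R = S` the phases cancel on the other block: `Rᴴ Z X Zᴴ R = O (Q X Qᴴ) Oᵀ`, which is real
because `O` is.
-/

open Matrix Complex

noncomputable def signPhase (x : ℝ) : ℂ := if x < 0 then I else 1

lemma signPhase_eq_one_or_I (x : ℝ) : signPhase x = 1 ∨ signPhase x = I := by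
  unfold signPhase; split_ifs <;> simp

lemma star_signPhase_mul_self (x : ℝ) : star (signPhase x) * signPhase x = 1 := by
  unfold signPhase; split_ifs <;> simp

lemma signPhase_mul_mul_self (x : ℝ) : signPhase x * x * signPhase x = (|x| : ℝ) := by
  unfold signPhase
  split_ifs with hx
  · rw [abs_of_neg hx, mul_right_comm, I_mul_I]; push_cast; ring
  · rw [abs_of_nonneg (not_lt.1 hx)]; simp

namespace Matrix

lemma map_re_map_ofRealHom_of_im_eq_zero {m n : Type*} {M : Matrix m n ℂ}
    (h : ∀ j k, (M j k).im = 0) : (M.map re).map ofRealHom = M := by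
  ext j k
  exact Complex.ext (by simp) (by simp [h j k])

lemma conjTranspose_map_ofRealHom {m n : Type*} (O : Matrix m n ℝ) :
    (O.map ofRealHom)ᴴ = Oᵀ.map ofRealHom := by
  rw [← conjTranspose_eq_transpose_of_trivial,
    conjTranspose_map (⇑ofRealHom) fun x => (conj_ofReal x).symm]

variable {n : Type*} [Fintype n] [DecidableEq n]

lemma map_ofRealHom_mem_unitaryGroup {O : Matrix n n ℝ} (hO : O ∈ orthogonalGroup n ℝ) :
    O.map ofRealHom ∈ unitaryGroup n ℂ := by
  rw [mem_orthogonalGroup_iff] at hO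
  rw [mem_unitaryGroup_iff, star_eq_conjTranspose, conjTranspose_map_ofRealHom]
  have := congrArg (·.map ofRealHom) hO
  rw [Matrix.map_mul, Matrix.map_one _ (map_zero _) (map_one _)] at this
  exact this

lemma diagonal_mem_unitaryGroup {α : Type*} [CommRing α] [StarRing α] {r : n → α}
    (hr : ∀ j, star (r j) * r j = 1) : diagonal r ∈ unitaryGroup n α := by
  rw [mem_unitaryGroup_iff', star_eq_conjTranspose, diagonal_conjTranspose,
    diagonal_mul_diagonal, ← diagonal_one]
  exact congrArg diagonal (funext hr)

lemma eq_conjTranspose_mul_mul_map_starRingEnd {α : Type*} [CommRing α] [StarRing α]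
    {Z Y D : Matrix n n α} (hZ : Z ∈ unitaryGroup n α) (h : Z * Y * Zᵀ = D) :
    Y = Zᴴ * D * Z.map (starRingEnd α) := by
  have hZZ : Zᴴ * Z = 1 := by rwa [mem_unitaryGroup_iff', star_eq_conjTranspose] at hZ
  have hZZt : Zᵀ * Z.map (starRingEnd α) = 1 := by
    rw [show Z.map (starRingEnd α) = Zᴴᵀ from rfl, ← transpose_mul, hZZ, transpose_one]
  calc Y = (Zᴴ * Z) * Y * (Zᵀ * Z.map (starRingEnd α)) := by rw [hZZ, hZZt, one_mul, mul_one]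
    _ = Zᴴ * (Z * Y * Zᵀ) * Z.map (starRingEnd α) := by simp only [Matrix.mul_assoc]
    _ = Zᴴ * D * Z.map (starRingEnd α) := by rw [h]

lemma IsHermitian.exists_orthogonal_mul_mul_transpose_eq_diagonal {A : Matrix n n ℝ}
    (hA : A.IsHermitian) : ∃ O ∈ orthogonalGroup n ℝ, ∃ d : n → ℝ, O * A * Oᵀ = diagonal d := by
  set U : Matrix n n ℝ := ↑hA.eigenvectorUnitary
  refine ⟨star U, Unitary.star_mem hA.eigenvectorUnitary.2, hA.eigenvalues, ?_⟩
  rw [show (star U)ᵀ = U by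
    rw [star_eq_conjTranspose, conjTranspose_eq_transpose_of_trivial, transpose_transpose]]
  simpa [Unitary.conjStarAlgAut_apply] using hA.conjStarAlgAut_star_eigenvectorUnitary

lemma IsHermitian.exists_orthogonal_takagi {A : Matrix n n ℝ} (hA : A.IsHermitian) :
    ∃ O ∈ orthogonalGroup n ℝ, ∃ d : n → ℝ,
      diagonal (signPhase ∘ d) * O.map ofRealHom * A.map ofRealHom *
          (diagonal (signPhase ∘ d) * O.map ofRealHom)ᵀ =
        diagonal fun j => ((|d j| : ℝ) : ℂ) := by
  obtain ⟨O, hO, d, hd⟩ := hA.exists_orthogonal_mul_mul_transpose_eq_diagonal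
  refine ⟨O, hO, d, ?_⟩
  set S := diagonal (signPhase ∘ d)
  calc S * O.map ofRealHom * A.map ofRealHom * (S * O.map ofRealHom)ᵀ
      = S * (O * A * Oᵀ).map ofRealHom * S := by
        rw [transpose_mul, diagonal_transpose, ← transpose_map, Matrix.map_mul, Matrix.map_mul]
        simp only [S, Matrix.mul_assoc]
    _ = diagonal fun j => signPhase (d j) * d j * signPhase (d j) := by
        rw [hd, diagonal_map (map_zero _), diagonal_mul_diagonal, diagonal_mul_diagonal]
        rfl
    _ = diagonal fun j => ((|d j| : ℝ) : ℂ) := by simp_rw [signPhase_mul_mul_self]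

end Matrix

open Matrix in
theorem decoupling_forward_general {n : ℕ} (X Y : Matrix (Fin n) (Fin n) ℂ)
    (hY : Yᵀ = Y)
    (Q : Matrix (Fin n) (Fin n) ℂ) (hQ : Q ∈ Matrix.unitaryGroup (Fin n) ℂ)
    (hQX : ∀ j k, ((Q * X * Qᴴ) j k).im = 0)
    (hQY : ∀ j k, ((Q * Y * Qᵀ) j k).im = 0) :
    ∃ (Z : Matrix (Fin n) (Fin n) ℂ) (σ : Fin n → ℝ) (r : Fin n → ℂ),
      Z ∈ Matrix.unitaryGroup (Fin n) ℂ ∧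
      (∀ j, 0 ≤ σ j) ∧
      Y = Zᴴ * Matrix.diagonal (fun j => (σ j : ℂ)) * (Z.map (starRingEnd ℂ)) ∧
      (∀ j, r j = 1 ∨ r j = Complex.I) ∧
      (∀ j k, (((Matrix.diagonal r)ᴴ * Z * X * Zᴴ * Matrix.diagonal r) j k).im = 0) := by
  set A := (Q * Y * Qᵀ).map re
  set B := (Q * X * Qᴴ).map re
  have hA : A.map ofRealHom = Q * Y * Qᵀ := map_re_map_ofRealHom_of_im_eq_zero hQY
  have hB : B.map ofRealHom = Q * X * Qᴴ := map_re_map_ofRealHom_of_im_eq_zero hQX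
  have hA_symm : A.IsHermitian := by
    refine (conjTranspose_eq_transpose_of_trivial A).trans (map_injective ofRealHom.injective ?_)
    show Aᵀ.map ofRealHom = A.map ofRealHom
    rw [transpose_map, hA, transpose_mul, transpose_mul, transpose_transpose, hY, Matrix.mul_assoc]
  obtain ⟨O, hO, d, hd⟩ := hA_symm.exists_orthogonal_takagi
  set S := diagonal (signPhase ∘ d)
  have hS_unitary : S ∈ unitaryGroup (Fin n) ℂ :=
    diagonal_mem_unitaryGroup fun j => star_signPhase_mul_self (d j)
  have hS : Sᴴ * S = 1 := by rw [← star_eq_conjTranspose]; exact mem_unitaryGroup_iff'.1 hS_unitary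
  set Z := S * O.map ofRealHom * Q
  have hZ : Z ∈ unitaryGroup (Fin n) ℂ :=
    mul_mem (mul_mem hS_unitary (map_ofRealHom_mem_unitaryGroup hO)) hQ
  have hZYZ : Z * Y * Zᵀ = diagonal fun j => ((|d j| : ℝ) : ℂ) := by
    rw [← hd, hA]
    simp only [Z, transpose_mul, Matrix.mul_assoc]
  have hX_real : Sᴴ * Z * X * Zᴴ * S = (O * B * Oᵀ).map ofRealHom := by
    rw [Matrix.map_mul, Matrix.map_mul, hB, ← conjTranspose_map_ofRealHom]
    simp only [Z, conjTranspose_mul, ← Matrix.mul_assoc, hS, Matrix.one_mul]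
    simp only [Matrix.mul_assoc, hS, Matrix.mul_one]
  refine ⟨Z, fun j => |d j|, signPhase ∘ d, hZ, fun j => abs_nonneg _,
    eq_conjTranspose_mul_mul_map_starRingEnd hZ hZYZ, fun j => signPhase_eq_one_or_I _, ?_⟩
  intro j k
  change ((Sᴴ * Z * X * Zᴴ * S) j k).im = 0
  simp [hX_real]

open Matrix in
/-- Forward direction of the decoupling theorem: if a passive (unitary) `Q`
makes `Q X Qᴴ` and `Q Y Qᵀ` simultaneously real, then there is an
Autonne–Takagi unitary `Z` for `Y` (`Y = Zᴴ Y₀ Z*`, `Y₀` real non-negative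
diagonal) and a diagonal `R` with entries in `{1, i}` such that
`Rᴴ Z X Zᴴ R` is real. -/
theorem decoupling_forward {n : ℕ} (X Y : Matrix (Fin n) (Fin n) ℂ)
    (hX : Xᴴ = X) (hY : Yᵀ = Y)
    (Q : Matrix (Fin n) (Fin n) ℂ) (hQ : Q ∈ Matrix.unitaryGroup (Fin n) ℂ)
    (hQX : ∀ j k, ((Q * X * Qᴴ) j k).im = 0)
    (hQY : ∀ j k, ((Q * Y * Qᵀ) j k).im = 0) :
    ∃ (Z : Matrix (Fin n) (Fin n) ℂ) (σ : Fin n → ℝ) (r : Fin n → ℂ),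
      Z ∈ Matrix.unitaryGroup (Fin n) ℂ ∧
      (∀ j, 0 ≤ σ j) ∧
      Y = Zᴴ * Matrix.diagonal (fun j => (σ j : ℂ)) * (Z.map (starRingEnd ℂ)) ∧
      (∀ j, r j = 1 ∨ r j = Complex.I) ∧
      (∀ j k, (((Matrix.diagonal r)ᴴ * Z * X * Zᴴ * Matrix.diagonal r) j k).im = 0) :=
  decoupling_forward_general X Y hY Q hQ hQX hQY
end

section
/- Let X be Hermitian and suppose there is a unitary Z such that M := Z X Z† has some entry M_{jk} that is neither real nor purely imaginary, where Z is the (essentially unique) Autonne–Takagi unitary of a complex symmetric Y with distinct nonzero singular values. Then for every diagonal matrix R with entries in {1, i}, the matrix R† M R is not real; consequently no passive operation makes X and Y simultaneously real. -/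
/-!
Write `M = Z X Zᴴ`. Conjugating by `diagonal r` with `r j ∈ {1, i}` multiplies `M j k` by one of
`±1, ±i`, so an entry that is neither real nor purely imaginary stays non-real. If a unitary `E`
made `E X Eᴴ` and `E Y Eᵀ` real, put `W = Z Eᴴ`; then `E Y Eᵀ = Wᴴ D W̄` with `D = diagonal σ`,
and its reality gives `S D = D S̄` for the symmetric unitary `S = W Wᵀ`. As the `σ j` are positive
and distinct, `S` is diagonal with entries `±1`, and `W = S W̄` says that every row of `W` is real
or purely imaginary: `O = (diagonal r)ᴴ W` is real for suitable `r`. But then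
`(diagonal r)ᴴ M (diagonal r) = O (E X Eᴴ) Oᴴ` is real.
-/

open Matrix ComplexConjugate

lemma Matrix.map_conj_eq_self_iff {m n : Type*} {A : Matrix m n ℂ} :
    A.map conj = A ↔ ∀ i j, (A i j).im = 0 := by
  simp only [← Matrix.ext_iff, map_apply, Complex.conj_eq_iff_im]

lemma Complex.eq_zero_of_mul_eq_mul_conj {z : ℂ} {a b : ℝ} (h₁ : z * b = a * conj z)
    (h₂ : z * a = b * conj z) (hab : a ^ 2 ≠ b ^ 2) : z = 0 := by
  have h : z * ((b : ℂ) ^ 2 - (a : ℂ) ^ 2) = 0 := by linear_combination (b : ℂ) * h₁ - (a : ℂ) * h₂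
  refine (mul_eq_zero.mp h).resolve_right ?_
  exact_mod_cast sub_ne_zero.mpr hab.symm

lemma Complex.conj_eq_of_mul_eq_mul_conj {z : ℂ} {a : ℝ} (h : z * a = a * conj z) (ha : a ≠ 0) :
    conj z = z :=
  (mul_left_cancel₀ (Complex.ofReal_ne_zero.mpr ha) (by rw [← h, mul_comm])).symm

lemma Complex.re_eq_zero_or_im_eq_zero_of_im_star_mul_mul_eq_zero {a b z : ℂ}
    (ha : a = 1 ∨ a = Complex.I) (hb : b = 1 ∨ b = Complex.I) (h : (star a * z * b).im = 0) :
    z.re = 0 ∨ z.im = 0 := by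
  rcases ha with rfl | rfl <;> rcases hb with rfl | rfl <;>
    simp [Complex.mul_im, Complex.mul_re] at h <;> simp [h]

namespace Matrix

lemma map_conj_mul_mul_conjTranspose_eq_self {m n : Type*} [Fintype n] {A : Matrix m n ℂ}
    {B : Matrix n n ℂ} (hA : A.map conj = A) (hB : B.map conj = B) :
    (A * B * Aᴴ).map conj = A * B * Aᴴ := by
  rw [Matrix.map_mul, Matrix.map_mul, hA, hB, conjTranspose_map (conj : ℂ → ℂ) (fun _ => rfl), hA]

variable {ι : Type*} [Fintype ι] [DecidableEq ι]

lemma conjTranspose_diagonal_mul_mul_diagonal_apply (r : ι → ℂ) (M : Matrix ι ι ℂ) (j k : ι) :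
    ((diagonal r)ᴴ * M * diagonal r) j k = star (r j) * M j k * r k := by
  rw [diagonal_conjTranspose, mul_diagonal, diagonal_mul, Pi.star_apply]

lemma not_forall_im_conjTranspose_diagonal_mul_mul_diagonal_eq_zero {M : Matrix ι ι ℂ} {j₀ k₀ : ι}
    (hre : (M j₀ k₀).re ≠ 0) (him : (M j₀ k₀).im ≠ 0) {r : ι → ℂ}
    (hr : ∀ j, r j = 1 ∨ r j = Complex.I) :
    ¬ ∀ j k, (((diagonal r)ᴴ * M * diagonal r) j k).im = 0 := fun h => by
  have h₀ := h j₀ k₀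
  rw [conjTranspose_diagonal_mul_mul_diagonal_apply] at h₀
  rcases Complex.re_eq_zero_or_im_eq_zero_of_im_star_mul_mul_eq_zero (hr j₀) (hr k₀) h₀ with h | h
  exacts [hre h, him h]

lemma transpose_mul_map_conj_of_mem_unitaryGroup {W : Matrix ι ι ℂ} (hW : W ∈ unitaryGroup ι ℂ) :
    Wᵀ * W.map conj = 1 := by
  have := congrArg transpose (mem_unitaryGroup_iff'.mp hW)
  rwa [star_eq_conjTranspose, transpose_mul, conjTranspose_transpose, transpose_one] at this

lemma mul_transpose_mem_unitaryGroup {W : Matrix ι ι ℂ} (hW : W ∈ unitaryGroup ι ℂ) :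
    W * Wᵀ ∈ unitaryGroup ι ℂ := by
  rw [mem_unitaryGroup_iff, star_eq_conjTranspose, conjTranspose_mul, mul_assoc, ← mul_assoc Wᵀ,
    show Wᵀᴴ = W.map conj from rfl, transpose_mul_map_conj_of_mem_unitaryGroup hW, one_mul, ← star_eq_conjTranspose, mem_unitaryGroup_iff.mp hW]

lemma mul_transpose_mul_eq_mul_map_conj {W D : Matrix ι ι ℂ} (hW : W ∈ unitaryGroup ι ℂ)
    (hD : D.map conj = D) (h : (Wᴴ * D * W.map conj).map conj = Wᴴ * D * W.map conj) :
    W * Wᵀ * D = D * (W * Wᵀ).map conj := by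
  have hWWh : W * Wᴴ = 1 := by rw [← star_eq_conjTranspose, ← mem_unitaryGroup_iff.mp hW]
  have hconj : (Wᴴ).map conj = Wᵀ := by ext; simp
  have hconj_conj : (W.map conj).map conj = W := by ext; simp
  have h' : Wᵀ * D * W = Wᴴ * D * W.map conj := by
    rw [← h, Matrix.map_mul, Matrix.map_mul, hconj, hD, hconj_conj]
  calc W * Wᵀ * D = W * (Wᵀ * D * W) * Wᴴ := by simp only [mul_assoc, hWWh, mul_one]
    _ = W * (Wᴴ * D * W.map conj) * Wᴴ := by rw [h']
    _ = D * (W * Wᵀ).map conj := by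
      rw [Matrix.map_mul, transpose_map, show (W.map conj)ᵀ = Wᴴ from rfl]
      simp only [← mul_assoc, hWWh, one_mul]

lemma exists_eq_diagonal_ofReal_of_mul_diagonal_eq {S : Matrix ι ι ℂ} (hS : Sᵀ = S)
    {σ : ι → ℝ} (hpos : ∀ j, 0 < σ j) (hinj : Function.Injective σ)
    (h : S * diagonal (fun j => (σ j : ℂ)) = diagonal (fun j => (σ j : ℂ)) * S.map conj) :
    ∃ s : ι → ℝ, S = diagonal (fun j => (s j : ℂ)) := by
  have entry (j k : ι) : S j k * σ k = σ j * conj (S j k) := by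
    simpa [mul_diagonal, diagonal_mul] using congrFun (congrFun h j) k
  refine ⟨fun j => (S j j).re, ext fun j k => ?_⟩
  rcases eq_or_ne j k with rfl | hjk
  · rw [diagonal_apply_eq]
    have hreal := Complex.conj_eq_of_mul_eq_mul_conj (entry j j) (hpos j).ne'
    exact (Complex.conj_eq_iff_re.mp hreal).symm
  · rw [diagonal_apply_ne _ hjk]
    have hsymm : S k j = S j k := congrFun (congrFun hS j) k
    refine Complex.eq_zero_of_mul_eq_mul_conj (entry j k) (hsymm ▸ entry k j) fun hsq => hjk ?_
    exact hinj ((sq_eq_sq₀ (hpos j).le (hpos k).le).mp hsq)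

lemma eq_one_or_eq_neg_one_of_diagonal_mem_unitaryGroup {s : ι → ℝ}
    (h : diagonal (fun j => (s j : ℂ)) ∈ unitaryGroup ι ℂ) (j : ι) : s j = 1 ∨ s j = -1 := by
  have hjj := congrFun (congrFun (mem_unitaryGroup_iff.mp h) j) j
  simp only [star_eq_conjTranspose, diagonal_conjTranspose, diagonal_mul_diagonal,
    diagonal_apply_eq, one_apply_eq, Pi.star_apply, Complex.star_def, Complex.conj_ofReal] at hjj
  exact mul_self_eq_one_iff.mp (by exact_mod_cast hjj)

lemma map_conj_conjTranspose_diagonal_mul_eq_self {W : Matrix ι ι ℂ} {r : ι → ℂ}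
    (hr : ∀ j, r j = 1 ∨ r j = Complex.I) (hW : W = diagonal (r * r) * W.map conj) :
    ((diagonal r)ᴴ * W).map conj = (diagonal r)ᴴ * W := by
  ext a b
  have hab := congrFun (congrFun hW a) b
  simp only [diagonal_mul, map_apply, Pi.mul_apply] at hab
  simp only [diagonal_conjTranspose, diagonal_mul, map_apply, Pi.star_apply, map_mul,
    Complex.star_def, Complex.conj_conj]
  rcases hr a with h | h <;> rw [h] at hab ⊢
  · simpa using hab.symm
  · simp only [Complex.I_mul_I, neg_one_mul, Complex.conj_I] at hab ⊢
    linear_combination Complex.I * hab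

lemma exists_phase_diagonal_of_map_conj_eq_self {W : Matrix ι ι ℂ} (hW : W ∈ unitaryGroup ι ℂ)
    {σ : ι → ℝ} (hpos : ∀ j, 0 < σ j) (hinj : Function.Injective σ)
    (h : (Wᴴ * diagonal (fun j => (σ j : ℂ)) * W.map conj).map conj =
      Wᴴ * diagonal (fun j => (σ j : ℂ)) * W.map conj) :
    ∃ r : ι → ℂ, (∀ j, r j = 1 ∨ r j = Complex.I) ∧
      ((diagonal r)ᴴ * W).map conj = (diagonal r)ᴴ * W := by
  have hD : (diagonal fun j => (σ j : ℂ)).map conj = diagonal fun j => (σ j : ℂ) := by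
    rw [diagonal_map (map_zero _)]; simp
  have hSt : (W * Wᵀ)ᵀ = W * Wᵀ := by rw [transpose_mul, transpose_transpose]
  obtain ⟨s, hs⟩ := exists_eq_diagonal_ofReal_of_mul_diagonal_eq hSt hpos hinj
    (mul_transpose_mul_eq_mul_map_conj hW hD h)
  have hsign :=
    eq_one_or_eq_neg_one_of_diagonal_mem_unitaryGroup (hs ▸ mul_transpose_mem_unitaryGroup hW)
  have hroot (j : ι) : ∃ r : ℂ, (r = 1 ∨ r = Complex.I) ∧ r * r = s j := by
    rcases hsign j with h | h
    · exact ⟨1, .inl rfl, by simp [h]⟩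
    · exact ⟨Complex.I, .inr rfl, by simp [h]⟩
  choose r hr hrr using hroot
  refine ⟨r, hr, map_conj_conjTranspose_diagonal_mul_eq_self hr ?_⟩
  calc W = W * Wᵀ * W.map conj := by
        rw [mul_assoc, transpose_mul_map_conj_of_mem_unitaryGroup hW, mul_one]
    _ = diagonal (r * r) * W.map conj := by rw [hs]; congr; funext j; exact (hrr j).symm

end Matrix

open Matrix in
theorem decoupling_obstruction_general {n : ℕ} (X Y Z : Matrix (Fin n) (Fin n) ℂ)
    (σ : Fin n → ℝ)
    (hZ : Z ∈ Matrix.unitaryGroup (Fin n) ℂ)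
    (hσpos : ∀ j, 0 < σ j)
    (hσdistinct : Function.Injective σ)
    (hAT : Y = Zᴴ * Matrix.diagonal (fun j => (σ j : ℂ)) * (Z.map (starRingEnd ℂ)))
    (j₀ k₀ : Fin n)
    (hre : ((Z * X * Zᴴ) j₀ k₀).re ≠ 0)
    (him : ((Z * X * Zᴴ) j₀ k₀).im ≠ 0) :
    (∀ r : Fin n → ℂ, (∀ j, r j = 1 ∨ r j = Complex.I) →
      ¬ (∀ j k, (((Matrix.diagonal r)ᴴ * (Z * X * Zᴴ) * Matrix.diagonal r) j k).im = 0)) ∧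
    ¬ (∃ E : Matrix (Fin n) (Fin n) ℂ,
        E ∈ Matrix.unitaryGroup (Fin n) ℂ ∧
        (∀ j k, ((E * X * Eᴴ) j k).im = 0) ∧
        (∀ j k, ((E * Y * Eᵀ) j k).im = 0)) := by
  refine ⟨fun r hr => not_forall_im_conjTranspose_diagonal_mul_mul_diagonal_eq_zero hre him hr, ?_⟩
  rintro ⟨E, hE, hXr, hYr⟩
  set W := Z * Eᴴ
  have hW : W ∈ unitaryGroup (Fin n) ℂ := mul_mem hZ (Unitary.star_mem hE)
  have hEYE : E * Y * Eᵀ = Wᴴ * diagonal (fun j => (σ j : ℂ)) * W.map conj := by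
    rw [hAT, Matrix.map_mul, show (Eᴴ).map conj = Eᵀ by ext; simp]
    simp only [W, conjTranspose_mul, conjTranspose_conjTranspose, mul_assoc]
  obtain ⟨r, hr, hRW⟩ := exists_phase_diagonal_of_map_conj_eq_self hW hσpos hσdistinct
    (hEYE ▸ map_conj_eq_self_iff.mpr hYr)
  refine not_forall_im_conjTranspose_diagonal_mul_mul_diagonal_eq_zero hre him hr
    (map_conj_eq_self_iff.mp ?_)
  have hEhE : Eᴴ * E = 1 := mem_unitaryGroup_iff'.mp hE
  have hM : (diagonal r)ᴴ * (Z * X * Zᴴ) * diagonal r =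
      (diagonal r)ᴴ * W * (E * X * Eᴴ) * ((diagonal r)ᴴ * W)ᴴ := by
    simp only [W, conjTranspose_mul, conjTranspose_conjTranspose, mul_assoc]
    simp only [← mul_assoc Eᴴ E, hEhE, one_mul]
  rw [hM]
  exact map_conj_mul_mul_conjTranspose_eq_self hRW (map_conj_eq_self_iff.mpr hXr)

open Matrix in
/-- Obstruction to decoupling: let `Y` be complex symmetric with Autonne–Takagi
factorisation `Y = Zᴴ Y₀ Z*`, the singular values `σ` being distinct and
nonzero (so `Z` is unique up to diagonal `±1` signs), and let `X` be Hermitian.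
If some entry of `M = Z X Zᴴ` is neither real nor purely imaginary, then for
every diagonal `R` with entries in `{1, i}` the matrix `Rᴴ M R` is not real,
and consequently no passive (unitary) operation makes `X` and `Y`
simultaneously real. -/
theorem decoupling_obstruction {n : ℕ} (X Y Z : Matrix (Fin n) (Fin n) ℂ)
    (σ : Fin n → ℝ)
    (hX : Xᴴ = X) (hY : Yᵀ = Y)
    (hZ : Z ∈ Matrix.unitaryGroup (Fin n) ℂ)
    (hσpos : ∀ j, 0 < σ j)
    (hσdistinct : Function.Injective σ)
    (hAT : Y = Zᴴ * Matrix.diagonal (fun j => (σ j : ℂ)) * (Z.map (starRingEnd ℂ)))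
    (j₀ k₀ : Fin n)
    (hre : ((Z * X * Zᴴ) j₀ k₀).re ≠ 0)
    (him : ((Z * X * Zᴴ) j₀ k₀).im ≠ 0) :
    (∀ r : Fin n → ℂ, (∀ j, r j = 1 ∨ r j = Complex.I) →
      ¬ (∀ j k, (((Matrix.diagonal r)ᴴ * (Z * X * Zᴴ) * Matrix.diagonal r) j k).im = 0)) ∧
    ¬ (∃ E : Matrix (Fin n) (Fin n) ℂ,
        E ∈ Matrix.unitaryGroup (Fin n) ℂ ∧
        (∀ j k, ((E * X * Eᴴ) j k).im = 0) ∧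
        (∀ j k, ((E * Y * Eᵀ) j k).im = 0)) :=
  decoupling_obstruction_general X Y Z σ hZ hσpos hσdistinct hAT j₀ k₀ hre him
end

section
/- There exists a 4×4 real symmetric positive-definite matrix 𝒮 satisfying the bona fide condition 𝒮 + (i/2)Ω ≥ 0 (with Ω the standard symplectic form) that has nonzero cross-quadrature correlations which cannot be removed by any symplectic orthogonal (passive) transformation; an example is 𝒮 = ½·[[3, 0.5, 1, 0],[0.5, 0.75, 0.5, 0],[1, 0.5, 2, 0],[0, 0, 0, 1]] in the ordering (q₁, p₁, q₂, p₂). -/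
/-!
The trace `tr(𝒮 Ω 𝒮² Ω 𝒮³ Ω)` is unchanged by `𝒮 ↦ O 𝒮 Oᵀ` whenever `Oᵀ O = 1` and
`O Ω Oᵀ = Ω`. A covariance matrix without `q`–`p` correlations commutes with the momentum
reflection `D = diag(1, -1, 1, -1)`, while `D Ω D = -Ω`; as the word contains `Ω` an odd number
of times, conjugation by `D` negates it without changing its trace, so the trace vanishes on such
matrices. For the given `𝒮` it equals `3/512`, so no passive transformation removes the cross
correlations. Positivity and the bona fide condition follow from explicit `L D Lᴴ` factorizations.
-/

open Matrix

section SymplecticTrace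

variable {n R : Type*} [Fintype n] [DecidableEq n] [CommRing R]

/-- The exponents `1, 2, 3` are distinct: otherwise the word is cyclically its own reverse, and
transposition (with `Sᵀ = S`, `Ωᵀ = -Ω`) forces its trace to vanish. -/
def symplecticTrace (Ω S : Matrix n n R) : R :=
  trace (S * Ω * S ^ 2 * Ω * S ^ 3 * Ω)

theorem symplecticTrace_conj {P Q : Matrix n n R} (hQP : Q * P = 1) (Ω S : Matrix n n R) :
    symplecticTrace (P * Ω * Q) (P * S * Q) = symplecticTrace Ω S := by
  let u : (Matrix n n R)ˣ := ⟨P, Q, mul_eq_one_comm.mp hQP, hQP⟩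
  have conj_mul (X Y : Matrix n n R) : P * X * Q * (P * Y * Q) = P * (X * Y) * Q := by
    simp only [mul_assoc, ← mul_assoc Q P, hQP, one_mul]
  have conj_pow (X : Matrix n n R) (k : ℕ) : (P * X * Q) ^ k = P * X ^ k * Q := u.conj_pow X k
  simp only [symplecticTrace, conj_pow, conj_mul]
  rw [trace_mul_cycle, hQP, one_mul]

theorem symplecticTrace_neg_left (Ω S : Matrix n n R) :
    symplecticTrace (-Ω) S = -symplecticTrace Ω S := by
  simp only [symplecticTrace, mul_neg, neg_mul, neg_neg, trace_neg]

theorem symplecticTrace_eq_zero_of_conj_eq_neg [NoZeroDivisors R] [CharZero R]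
    {P Q Ω S : Matrix n n R} (hQP : Q * P = 1) (hΩ : P * Ω * Q = -Ω) (hS : P * S * Q = S) :
    symplecticTrace Ω S = 0 := by
  have h := symplecticTrace_conj hQP Ω S
  rwa [hΩ, hS, symplecticTrace_neg_left, neg_eq_iff_add_eq_zero, add_self_eq_zero] at h

end SymplecticTrace

def symplecticForm : Matrix (Fin 4) (Fin 4) ℝ :=
  !![0, 1, 0, 0; -1, 0, 0, 0; 0, 0, 0, 1; 0, 0, -1, 0]

def momentumReflection : Matrix (Fin 4) (Fin 4) ℝ := diagonal ![1, -1, 1, -1]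

theorem momentumReflection_mul_self : momentumReflection * momentumReflection = 1 := by
  rw [momentumReflection, diagonal_mul_diagonal, ← diagonal_one]
  congr 1
  ext i
  fin_cases i <;> norm_num

theorem momentumReflection_conj_symplecticForm :
    momentumReflection * symplecticForm * momentumReflection = -symplecticForm := by
  ext i j
  fin_cases i <;> fin_cases j <;> simp [momentumReflection, symplecticForm]

theorem momentumReflection_conj_of_cross_eq_zero {S : Matrix (Fin 4) (Fin 4) ℝ} (hS : Sᵀ = S)
    (hcross : ∀ j k : Fin 2, S (![0, 2] j) (![1, 3] k) = 0) :
    momentumReflection * S * momentumReflection = S := by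
  have hcross' (j k : Fin 2) : S (![1, 3] k) (![0, 2] j) = 0 := by
    rw [← hS]
    exact hcross j k
  ext i j
  fin_cases i <;> fin_cases j <;> simp_all [momentumReflection]

noncomputable def lockedCovariance : Matrix (Fin 4) (Fin 4) ℝ :=
  (1 / 2 : ℝ) • !![3, 0.5, 1, 0; 0.5, 0.75, 0.5, 0; 1, 0.5, 2, 0; 0, 0, 0, 1]

theorem lockedCovariance_transpose : lockedCovarianceᵀ = lockedCovariance := by
  ext i j
  fin_cases i <;> fin_cases j <;> simp [lockedCovariance]

theorem lockedCovariance_posDef : lockedCovariance.PosDef := by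
  let L : Matrix (Fin 4) (Fin 4) ℝ := !![1, 1/6, 1/3, 0; 0, 1, 1/2, 0; 0, 0, 1, 0; 0, 0, 0, 1]
  have hL : IsUnit L := by
    rw [isUnit_iff_isUnit_det]
    simp [L, det_succ_row_zero, Fin.sum_univ_succ, submatrix, Fin.succAbove]
  have hLDL : lockedCovariance = star L * diagonal ![3/2, 1/3, 3/4, 1/2] * L := by
    ext i j
    fin_cases i <;> fin_cases j <;>
      simp [L, lockedCovariance, mul_apply, Fin.sum_univ_succ, diagonal_apply] <;> norm_num
  rw [hLDL, IsUnit.posDef_star_left_conjugate_iff hL, posDef_diagonal_iff]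
  intro i
  fin_cases i <;> norm_num

open ComplexOrder in
theorem lockedCovariance_bonaFide :
    (lockedCovariance.map (fun x => (x : ℂ)) +
      (Complex.I / 2) • symplecticForm.map (fun x => (x : ℂ))).PosSemidef := by
  let L : Matrix (Fin 4) (Fin 4) ℂ :=
    !![1, 1/6 + Complex.I/3, 1/3, 0; 0, 1, 1 + Complex.I, 0; 0, 0, 1, Complex.I; 0, 0, 0, 1]
  have hLDL : lockedCovariance.map (fun x => (x : ℂ)) +
      (Complex.I / 2) • symplecticForm.map (fun x => (x : ℂ)) =
        Lᴴ * diagonal ![3/2, 1/6, 1/2, 0] * L := by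
    ext i j
    fin_cases i <;> fin_cases j <;>
      simp [L, lockedCovariance, symplecticForm, mul_apply, Fin.sum_univ_succ, diagonal_apply,
        Complex.ext_iff] <;>
      norm_num [Complex.div_re, Complex.div_im, map_ofNat]
  rw [hLDL]
  refine (posSemidef_diagonal_iff.mpr fun i => ?_).conjTranspose_mul_mul_same L
  fin_cases i <;> norm_num [Complex.nonneg_iff]

theorem symplecticTrace_lockedCovariance :
    symplecticTrace symplecticForm lockedCovariance = 3 / 512 := by
  norm_num [symplecticTrace, symplecticForm, lockedCovariance, pow_succ, smul_of, cons_mul,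
    cons_vecMul, vecMul_cons, empty_vecMul, trace, Fin.sum_univ_succ]

open Matrix ComplexOrder in
/-- There is a bona fide 4×4 quadrature covariance matrix (real symmetric,
positive definite, satisfying `𝒮 + (i/2)Ω ≥ 0`) with nonzero cross-quadrature
correlations that cannot be removed by any symplectic orthogonal (passive)
transformation; an example (in the ordering `(q₁, p₁, q₂, p₂)`) is
`𝒮 = ½[[3, 0.5, 1, 0],[0.5, 0.75, 0.5, 0],[1, 0.5, 2, 0],[0, 0, 0, 1]]`. -/
theorem locked_in_cross_correlations :
    let Ω : Matrix (Fin 4) (Fin 4) ℝ :=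
      !![0, 1, 0, 0; -1, 0, 0, 0; 0, 0, 0, 1; 0, 0, -1, 0]
    let qidx : Fin 2 → Fin 4 := ![0, 2]
    let pidx : Fin 2 → Fin 4 := ![1, 3]
    ∃ 𝒮 : Matrix (Fin 4) (Fin 4) ℝ,
      𝒮 = (1 / 2 : ℝ) •
        !![3, 0.5, 1, 0; 0.5, 0.75, 0.5, 0; 1, 0.5, 2, 0; 0, 0, 0, 1] ∧
      𝒮ᵀ = 𝒮 ∧
      𝒮.PosDef ∧
      (𝒮.map (fun x => (x : ℂ)) +
        (Complex.I / 2) • Ω.map (fun x => (x : ℂ))).PosSemidef ∧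
      (∃ j k : Fin 2, 𝒮 (qidx j) (pidx k) ≠ 0) ∧
      (∀ O : Matrix (Fin 4) (Fin 4) ℝ,
        O ∈ Matrix.orthogonalGroup (Fin 4) ℝ →
        O * Ω * Oᵀ = Ω →
        ∃ j k : Fin 2, (O * 𝒮 * Oᵀ) (qidx j) (pidx k) ≠ 0) := by
  intro Ω qidx pidx
  refine ⟨lockedCovariance, rfl, lockedCovariance_transpose, lockedCovariance_posDef,
    lockedCovariance_bonaFide, ⟨0, 0, by norm_num [qidx, pidx, lockedCovariance]⟩, ?_⟩
  intro O hO hΩ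
  by_contra! hcross
  have hOO : Oᵀ * O = 1 := (mem_orthogonalGroup_iff' (Fin 4) ℝ).mp hO
  have hsymm : (O * lockedCovariance * Oᵀ)ᵀ = O * lockedCovariance * Oᵀ := by
    simp only [transpose_mul, transpose_transpose, lockedCovariance_transpose, mul_assoc]
  have hvanish : symplecticTrace symplecticForm (O * lockedCovariance * Oᵀ) = 0 :=
    symplecticTrace_eq_zero_of_conj_eq_neg momentumReflection_mul_self
      momentumReflection_conj_symplecticForm (momentumReflection_conj_of_cross_eq_zero hsymm hcross)
  have hΩ' : O * symplecticForm * Oᵀ = symplecticForm := hΩ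
  rw [← hΩ', symplecticTrace_conj hOO, symplecticTrace_lockedCovariance] at hvanish
  norm_num at hvanish
end
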